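/- arXiv:1811.03287 — 4 statements merged into one kernel-verified Lean document; each statement's English description precedes it below -/
import Mathlib

section
/- If X given N is uniform on {0,1,...,N} and N follows a negative binomial distribution with parameters r>0 and 0<p<1 (pmf P(N=n)=C(r+n-1,n)p^r q^n with q=1-p), then the marginal pmf of X is p(x) = q^x p^r / (1+x) * C(r+x-1, x) * 2F1(1, r+x; 2+x; q) for x = 0,1,2,... -/
open scoped BigOperators

/-- Pochhammer (rising factorial) `(a)_n`. -/
noncomputable def poch (a : ℝ) (n : ℕ) : ℝ := ∏ i ∈ Finset.range n, (a + i)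

/-- Gauss hypergeometric function `₂F₁(a,b;c;z)`. -/
noncomputable def F21 (a b c z : ℝ) : ℝ :=
  ∑' n : ℕ, poch a n * poch b n / poch c n * z ^ n / n.factorial

/-- Pmf of the Uniform–Negative Binomial distribution `UNB(r,p)`. -/
noncomputable def unbPMF (r p : ℝ) (x : ℕ) : ℝ :=
  (1 - p) ^ x * p ^ r / (x + 1) *
    (Real.Gamma (r + x) / (Real.Gamma r * (x.factorial : ℝ))) *
    F21 1 (r + x) (2 + x) (1 - p)

/-- Pmf of the negative binomial distribution `NB(r,p)` (generalized binomial coefficient). -/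
noncomputable def nbPMF (r p : ℝ) (n : ℕ) : ℝ :=
  Real.Gamma (r + n) / (Real.Gamma r * (n.factorial : ℝ)) * p ^ r * (1 - p) ^ n

lemma poch_one (k : ℕ) : poch 1 k = k.factorial := by
  induction k with
  | zero => simp [poch]
  | succ n ih =>
    rw [poch, Finset.prod_range_succ, ← poch, ih]
    push_cast [Nat.factorial_succ]
    ring

lemma Gamma_poch (a : ℝ) (ha : 0 < a) (k : ℕ) :
    Real.Gamma (a + k) = Real.Gamma a * poch a k := by
  induction k with
  | zero => simp [poch]
  | succ n ih =>
    have hne : a + n ≠ 0 := by positivity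
    have h : a + ((n : ℝ) + 1) = (a + n) + 1 := by ring
    rw [Nat.cast_succ, h, Real.Gamma_add_one hne, ih]
    rw [show poch a (n+1) = poch a n * (a + n) from Finset.prod_range_succ _ _]
    ring

lemma poch_two (x k : ℕ) :
    ((x+1).factorial : ℝ) * poch (2 + x) k = ((x+1+k).factorial : ℝ) := by
  induction k with
  | zero => simp [poch]
  | succ n ih =>
    rw [poch, Finset.prod_range_succ, ← poch, ← mul_assoc, ih]
    have h : x + 1 + (n+1) = (x+1+n) + 1 := by ring
    rw [h, Nat.factorial_succ]
    push_cast
    ring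

lemma poch_pos (a : ℝ) (ha : 0 < a) (k : ℕ) : 0 < poch a k := by
  apply Finset.prod_pos
  intro i _
  positivity

theorem stmt0 (r p : ℝ) (hr : 0 < r) (hp0 : 0 < p) (hp1 : p < 1) (x : ℕ) :
    (∑' n : ℕ, if x ≤ n then nbPMF r p n / (n + 1) else 0) = unbPMF r p x := by
  have hΓr : Real.Gamma r ≠ 0 := (Real.Gamma_pos_of_pos hr).ne'
  have hrx : (0:ℝ) < r + x := by positivity
  have hΓrx : Real.Gamma (r + x) ≠ 0 := (Real.Gamma_pos_of_pos hrx).ne'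
  -- reindex the LHS
  have hinj : Function.Injective (fun k : ℕ => x + k) := fun a b h => by
    simpa using h
  have hsupp : (Function.support fun n : ℕ => if x ≤ n then nbPMF r p n / (n + 1) else 0)
      ⊆ Set.range (fun k : ℕ => x + k) := by
    intro n hn
    by_cases hle : x ≤ n
    · exact ⟨n - x, by simp; omega⟩
    · simp [hle] at hn
  rw [← Function.Injective.tsum_eq hinj hsupp]
  simp only [Nat.le_add_right, if_true]
  -- expand the RHS
  rw [unbPMF, F21, ← tsum_mul_left]
  apply tsum_congr
  intro k
  have h1 : r + ((x + k : ℕ) : ℝ) = (r + x) + k := by push_cast; ring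
  have h2 : poch (2 + (x:ℝ)) k = ((x+1+k).factorial : ℝ) / ((x+1).factorial : ℝ) := by
    rw [← poch_two x k]
    field_simp
  rw [nbPMF, h1, Gamma_poch (r + x) hrx k, poch_one, h2]
  have hfa : x + 1 + k = (x + k) + 1 := by omega
  have hfac1 : (((x+k)+1).factorial : ℝ) = ((x+k).factorial : ℝ) * ((x:ℝ)+(k:ℝ)+1) := by
    rw [Nat.factorial_succ]; push_cast; ring
  have hfac2 : ((x+1).factorial : ℝ) = (x.factorial:ℝ) * ((x:ℝ)+1) := by
    rw [Nat.factorial_succ]; push_cast; ring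
  rw [hfa, hfac1, hfac2]
  have hxk : ((x.factorial : ℝ)) ≠ 0 := by positivity
  have hkk : ((k.factorial : ℝ)) ≠ 0 := by positivity
  have hxkk : (((x+k).factorial : ℝ)) ≠ 0 := by positivity
  have hx1 : ((x:ℝ)+1) ≠ 0 := by positivity
  have hxk1 : ((x:ℝ)+(k:ℝ)+1) ≠ 0 := by positivity
  have hcast : (((x+k:ℕ)):ℝ) + 1 = (x:ℝ)+(k:ℝ)+1 := by push_cast; ring
  rw [hcast]
  field_simp
  ring
end

section
/- The pmf p(x) = q^x p^r / (1+x) * C(r+x-1, x) * 2F1(1, r+x; 2+x; q) with r>0, 0<p<1, q=1-p sums to 1 over x = 0,1,2,..., i.e., it defines a valid probability distribution. -/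
open scoped BigOperators

/-!
Expanding the hypergeometric series gives
`unbPMF r p x = ∑_{k ≥ 0} nbPMF r p (x + k) / (x + k + 1)`: UNB(r, p) is the law of a uniform
draw from `{0, …, N}` with `N ~ NB(r, p)`. Summing over `x`, each term `nbPMF r p n / (n + 1)`
is counted `n + 1` times, so the total mass is `∑ₙ nbPMF r p n = p ^ r * (1 - q) ^ (-r) = 1`
by the binomial series at `q = 1 - p`.
-/

lemma poch_succ (a : ℝ) (n : ℕ) : poch a (n + 1) = poch a n * (a + n) :=
  Finset.prod_range_succ _ _

lemma poch_eq_ascPochhammer_eval (a : ℝ) (n : ℕ) : poch a n = (ascPochhammer ℝ n).eval a := by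
  induction n with
  | zero => simp [poch]
  | succ n ih => rw [poch_succ, ih, ascPochhammer_succ_eval]

lemma factorial_mul_poch_natCast_add_one (m k : ℕ) :
    (m.factorial : ℝ) * poch (m + 1) k = (m + k).factorial := by
  rw [show (m : ℝ) + 1 = ((m + 1 : ℕ) : ℝ) by push_cast; ring, poch_eq_ascPochhammer_eval,
    ascPochhammer_nat_eq_natCast_ascFactorial]
  exact_mod_cast Nat.factorial_mul_ascFactorial m k

lemma Ring.choose_add_natCast_sub_one (a : ℝ) (n : ℕ) :
    Ring.choose (a + n - 1) n = poch a n / n.factorial := by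
  rw [Ring.choose_eq_smul, Polynomial.descPochhammer_smeval_eq_ascPochhammer,
    Polynomial.ascPochhammer_smeval_eq_eval,
    poch_eq_ascPochhammer_eval, smul_eq_mul, inv_mul_eq_div]
  ring_nf

lemma Real.hasSum_choose_add_sub_one_mul_pow (a : ℝ) {x : ℝ} (hx : |x| < 1) :
    HasSum (fun n : ℕ => Ring.choose (a + n - 1) n * x ^ n) (1 / (1 - x) ^ a) := by
  have h := (Real.one_div_one_sub_rpow_hasFPowerSeriesOnBall_zero a).hasSum
    (y := x) (by simpa [enorm_eq_nnnorm, ← Real.norm_eq_abs, ← NNReal.coe_lt_coe] using hx)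
  simpa [FormalMultilinearSeries.ofScalars_apply_eq, mul_comm] using h

open Finset.HasAntidiagonal in
lemma hasSum_tsum_nat_add_of_nonneg {f : ℕ → ℝ} {s : ℝ} (hf : ∀ n, 0 ≤ f n)
    (h : HasSum (fun n : ℕ => (n + 1) * f n) s) :
    HasSum (fun m => ∑' k, f (m + k)) s := by
  have hfiber (n : ℕ) :
      HasSum (fun b : antidiagonal n => f (b.1.1 + b.1.2)) ((n + 1) * f n) := by
    have h := hasSum_fintype fun b : antidiagonal n => f (b.1.1 + b.1.2)
    rw [Finset.sum_congr rfl fun b _ => congrArg f (mem_antidiagonal.mp b.2)] at h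
    simpa using h
  have hσ : HasSum (fun b : Σ n, antidiagonal n => f (b.2.1.1 + b.2.1.2)) s := by
    refine h.sigma_of_hasSum hfiber ?_
    exact (summable_sigma_of_nonneg fun _ => hf _).mpr
      ⟨fun n => (hfiber n).summable, by simpa only [(hfiber _).tsum_eq] using h.summable⟩
  have hprod : HasSum (fun q : ℕ × ℕ => f (q.1 + q.2)) s :=
    sigmaAntidiagonalEquivProd.hasSum_iff.mp hσ
  exact hprod.prod_fiberwise fun m =>
    ((summable_prod_of_nonneg fun _ => hf _).mp hprod.summable).1 m |>.hasSum

lemma Real.Gamma_add_natCast_eq_mul_poch {a : ℝ} (ha : 0 < a) (n : ℕ) :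
    Real.Gamma (a + n) = Real.Gamma a * poch a n := by
  induction n with
  | zero => simp [poch]
  | succ n ih =>
    rw [Nat.cast_succ, ← add_assoc, Real.Gamma_add_one (by positivity), ih, poch_succ]
    ring

lemma Real.Gamma_add_natCast_div_eq_choose {a : ℝ} (ha : 0 < a) (n : ℕ) :
    Real.Gamma (a + n) / (Real.Gamma a * n.factorial) = Ring.choose (a + n - 1) n := by
  rw [Real.Gamma_add_natCast_eq_mul_poch ha, Ring.choose_add_natCast_sub_one,
    mul_div_mul_left _ _ (Real.Gamma_pos_of_pos ha).ne']

lemma hasSum_nbPMF {r p : ℝ} (hr : 0 < r) (hp0 : 0 < p) (hp2 : p < 2) :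
    HasSum (nbPMF r p) 1 := by
  have hq : |1 - p| < 1 := by rw [abs_lt]; constructor <;> linarith
  have h := (Real.hasSum_choose_add_sub_one_mul_pow r hq).mul_left (p ^ r)
  rw [sub_sub_cancel, mul_one_div_cancel (Real.rpow_pos_of_pos hp0 r).ne'] at h
  refine h.congr_fun fun n => ?_
  rw [nbPMF, Real.Gamma_add_natCast_div_eq_choose hr]
  ring

lemma nbPMF_nonneg {r p : ℝ} (hr : 0 < r) (hp0 : 0 ≤ p) (hp1 : p ≤ 1) (n : ℕ) :
    0 ≤ nbPMF r p n := by
  have := Real.Gamma_pos_of_pos hr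
  have := Real.Gamma_pos_of_pos (show 0 < r + n by positivity)
  have : 0 ≤ 1 - p := by linarith
  unfold nbPMF
  positivity

lemma unbPMF_eq_tsum_nbPMF_div {r : ℝ} (hr : 0 < r) (p : ℝ) (x : ℕ) :
    unbPMF r p x = ∑' k : ℕ, nbPMF r p (x + k) / ((x + k : ℕ) + 1) := by
  rw [unbPMF, F21, ← tsum_mul_left]
  refine tsum_congr fun k => ?_
  have hpoch_one : poch 1 k = k.factorial := by
    simpa using factorial_mul_poch_natCast_add_one 0 k
  have hpoch_two : poch (2 + x) k = (x + 1 + k).factorial / (x + 1).factorial := by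
    rw [eq_div_iff (by positivity), mul_comm, ← factorial_mul_poch_natCast_add_one (x + 1) k]
    congr 2
    push_cast
    ring
  have hGamma : Real.Gamma (r + (x + k : ℕ)) = Real.Gamma (r + x) * poch (r + x) k := by
    rw [Nat.cast_add, ← add_assoc, Real.Gamma_add_natCast_eq_mul_poch (by positivity)]
  rw [nbPMF, hGamma, hpoch_one, hpoch_two, show x + 1 + k = x + k + 1 by ring,
    Nat.factorial_succ, Nat.factorial_succ, pow_add]
  push_cast
  field_simp

theorem stmt1 (r p : ℝ) (hr : 0 < r) (hp0 : 0 < p) (hp1 : p < 1) :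
    (∑' x : ℕ, unbPMF r p x) = 1 := by
  have hweighted : HasSum (fun n : ℕ => ((n : ℝ) + 1) * (nbPMF r p n / (n + 1))) 1 :=
    (hasSum_nbPMF hr hp0 (by linarith)).congr_fun fun n => mul_div_cancel₀ _ (by positivity)
  have hnonneg (n : ℕ) : 0 ≤ nbPMF r p n / (n + 1) :=
    div_nonneg (nbPMF_nonneg hr hp0.le hp1.le n) (by positivity)
  simp_rw [unbPMF_eq_tsum_nbPMF_div hr]
  exact (hasSum_tsum_nat_add_of_nonneg hnonneg hweighted).tsum_eq
end

section
/- For the UNB(r,p) pmf p(x), the recurrence p(x+1) = p(x) - p^r q^x / (x+1) * C(r+x-1, r-1) holds for all x >= 0. -/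
open scoped BigOperators

/-- Auxiliary term: `g r p x n = p^r q^{x+n} Γ(r+x+n) / (Γ(r) (x+1+n)!)`. -/
noncomputable def unbTerm (r p : ℝ) (x n : ℕ) : ℝ :=
  p ^ r * (1 - p) ^ (x + n) * Real.Gamma (r + x + n) /
    (Real.Gamma r * ((x + 1 + n).factorial : ℝ))

lemma poch_one_s2 (n : ℕ) : poch 1 n = n.factorial := by
  induction n with
  | zero => simp [poch]
  | succ k ih =>
    rw [poch, Finset.prod_range_succ, ← poch, ih,
      Nat.factorial_succ]
    push_cast
    ring

lemma poch_gamma (a : ℝ) (ha : 0 < a) (n : ℕ) :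
    poch a n = Real.Gamma (a + n) / Real.Gamma a := by
  induction n with
  | zero => simp [poch, div_self (Real.Gamma_pos_of_pos ha).ne']
  | succ k ih =>
    have hpos : (0:ℝ) < a + k := by positivity
    have h1 : Real.Gamma (a + (k:ℝ) + 1) = (a + k) * Real.Gamma (a + k) :=
      Real.Gamma_add_one (ne_of_gt hpos)
    rw [poch, Finset.prod_range_succ, ← poch, ih]
    push_cast
    rw [show a + ((k:ℝ) + 1) = a + (k:ℝ) + 1 by ring, h1]
    ring

lemma gamma_nat (m : ℕ) : Real.Gamma ((m : ℝ) + 1) = m.factorial := by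
  exact_mod_cast Real.Gamma_nat_eq_factorial m

/-- Termwise identity for the series defining `unbPMF`. -/
lemma unb_eq_tsum (r p : ℝ) (hr : 0 < r) (hp0 : 0 < p) (hp1 : p < 1) (x : ℕ) :
    unbPMF r p x = ∑' n : ℕ, unbTerm r p x n := by
  have hgr : Real.Gamma r ≠ 0 := ne_of_gt (Real.Gamma_pos_of_pos hr)
  have hrx : (0:ℝ) < r + x := by positivity
  have hgrx : Real.Gamma (r + x) ≠ 0 := ne_of_gt (Real.Gamma_pos_of_pos hrx)
  rw [unbPMF, F21, ← tsum_mul_left]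
  congr 1
  funext n
  rw [poch_one_s2, poch_gamma (r + x) hrx, poch_gamma (2 + x) (by positivity), unbTerm]
  have h2 : (2:ℝ) + x = ((x + 1 : ℕ) : ℝ) + 1 := by push_cast; ring
  have h3 : (2:ℝ) + x + n = ((x + 1 + n : ℕ) : ℝ) + 1 := by push_cast; ring
  rw [h3, h2, gamma_nat, gamma_nat]
  have hfx : ((x.factorial : ℝ)) ≠ 0 := by positivity
  have hfn : ((n.factorial : ℝ)) ≠ 0 := by positivity
  have hf1 : (((x+1).factorial : ℝ)) ≠ 0 := by positivity
  have hf2 : (((x+1+n).factorial : ℝ)) ≠ 0 := by positivity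
  have hx1 : ((x:ℝ) + 1) ≠ 0 := by positivity
  have hfac : (((x+1).factorial : ℝ)) = ((x:ℝ) + 1) * (x.factorial : ℝ) := by
    rw [Nat.factorial_succ]; push_cast; ring
  field_simp
  rw [hfac]
  ring

lemma unbTerm_succ (r p : ℝ) (x n : ℕ) (hr : 0 < r) :
    unbTerm r p x (n + 1) =
      (1 - p) * (r + x + n) / (x + 2 + n) * unbTerm r p x n := by
  have hpos : (0:ℝ) < r + x + n := by positivity
  have h1 : Real.Gamma (r + x + ((n:ℝ) + 1)) = (r + x + n) * Real.Gamma (r + x + n) := by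
    rw [show r + (x:ℝ) + ((n:ℝ) + 1) = (r + x + n) + 1 by ring]
    exact Real.Gamma_add_one (ne_of_gt hpos)
  simp only [unbTerm]
  push_cast
  rw [h1, show x + 1 + (n + 1) = (x + 1 + n) + 1 by ring, Nat.factorial_succ]
  have hf : (((x+1+n).factorial : ℝ)) ≠ 0 := by positivity
  have hgr : Real.Gamma r ≠ 0 := ne_of_gt (Real.Gamma_pos_of_pos hr)
  have hx2 : ((x:ℝ) + 2 + n) ≠ 0 := by positivity
  push_cast
  field_simp
  ring

lemma unbTerm_nonneg (r p : ℝ) (hr : 0 < r) (hp0 : 0 < p) (hp1 : p < 1) (x n : ℕ) :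
    0 ≤ unbTerm r p x n := by
  have h1 : (0:ℝ) < 1 - p := by linarith
  have h2 : (0:ℝ) < Real.Gamma (r + x + n) :=
    Real.Gamma_pos_of_pos (by positivity)
  have h3 : (0:ℝ) < Real.Gamma r := Real.Gamma_pos_of_pos hr
  rw [unbTerm]
  positivity

lemma unbTerm_summable (r p : ℝ) (hr : 0 < r) (hp0 : 0 < p) (hp1 : p < 1) (x : ℕ) :
    Summable (unbTerm r p x) := by
  set q : ℝ := 1 - p with hq
  have hq0 : 0 < q := by simp [hq]; linarith
  have hq1 : q < 1 := by simp [hq]; linarith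
  set c : ℝ := (1 + q) / 2 with hc
  have hqc : q < c := by simp [hc]; linarith
  have hc1 : c < 1 := by simp [hc]; linarith
  obtain ⟨N, hN⟩ : ∃ N : ℕ, q * (r + x) ≤ (c - q) * N := by
    refine ⟨⌈q * (r + x) / (c - q)⌉₊, ?_⟩
    have h := Nat.le_ceil (q * (r + x) / (c - q))
    have hcq : (0:ℝ) < c - q := by linarith
    calc q * (r + x) = q * (r + x) / (c - q) * (c - q) := by field_simp
    _ ≤ (⌈q * (r + x) / (c - q)⌉₊ : ℝ) * (c - q) := by
        apply mul_le_mul_of_nonneg_right h (le_of_lt hcq)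
    _ = (c - q) * ⌈q * (r + x) / (c - q)⌉₊ := by ring
  apply summable_of_ratio_norm_eventually_le hc1
  filter_upwards [Filter.eventually_ge_atTop N] with n hn
  have hratio := unbTerm_succ r p x n hr
  have hpos := unbTerm_nonneg r p hr hp0 hp1 x n
  have hpos1 := unbTerm_nonneg r p hr hp0 hp1 x (n + 1)
  rw [Real.norm_of_nonneg hpos1, Real.norm_of_nonneg hpos, hratio]
  have hx2 : (0:ℝ) < (x:ℝ) + 2 + n := by positivity
  have hnn : (N:ℝ) ≤ n := by exact_mod_cast hn
  have hkey : q * (r + x + n) ≤ c * ((x:ℝ) + 2 + n) := by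
    have h1 : q * (r + x) ≤ (c - q) * n := le_trans hN (by nlinarith [hq0])
    nlinarith [hc, hq0, hqc]
  calc q * (r + (x:ℝ) + n) / ((x:ℝ) + 2 + n) * unbTerm r p x n
      ≤ c * unbTerm r p x n := by
        apply mul_le_mul_of_nonneg_right _ hpos
        rw [div_le_iff₀ hx2]
        linarith [hkey]
    _ = c * unbTerm r p x n := rfl

theorem stmt2 (r p : ℝ) (hr : 0 < r) (hp0 : 0 < p) (hp1 : p < 1) (x : ℕ) :
    unbPMF r p (x + 1) =
      unbPMF r p x -
        p ^ r * (1 - p) ^ x / (x + 1) *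
          (Real.Gamma (r + x) / (Real.Gamma r * (x.factorial : ℝ))) := by
  have hsum := unbTerm_summable r p hr hp0 hp1 x
  have hshift : ∀ n : ℕ, unbTerm r p (x + 1) n = unbTerm r p x (n + 1) := by
    intro n
    simp only [unbTerm]
    rw [show x + 1 + n = x + (n + 1) by ring, show x + 1 + 1 + n = x + 1 + (n + 1) by ring]
    push_cast
    ring_nf
  have h0 : unbTerm r p x 0 =
      p ^ r * (1 - p) ^ x / (x + 1) *
        (Real.Gamma (r + x) / (Real.Gamma r * (x.factorial : ℝ))) := by
    simp only [unbTerm, Nat.add_zero, Nat.cast_zero, add_zero]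
    rw [Nat.factorial_succ]
    have hgr : Real.Gamma r ≠ 0 := ne_of_gt (Real.Gamma_pos_of_pos hr)
    have hfx : ((x.factorial : ℝ)) ≠ 0 := by positivity
    have hx1 : ((x:ℝ) + 1) ≠ 0 := by positivity
    push_cast
    rw [div_mul_div_comm]
    congr 1 <;> ring
  rw [unb_eq_tsum r p hr hp0 hp1 (x + 1), unb_eq_tsum r p hr hp0 hp1 x]
  rw [tsum_congr hshift]
  rw [Summable.tsum_eq_zero_add hsum, h0]
  ring
end

section
/- If X ~ UNB(r,p) and Y ~ NB(r,p), then for every x >= 0 the cdf of X satisfies F_X(x) = F_Y(x) + (r+x)/(x+2) * C(r+x-1, x) * p^r q^{x+1} * 2F1(1, r+x+1; x+3; q). -/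
open scoped BigOperators

/-!
Conditioning on `N`, `P(X = k) = ∑_{j ≥ k} P(N = j) / (j + 1)`, and this tail series is exactly
the `₂F₁(1, r + k; k + 2; q)` series in `unbPMF`. Summing over `k ≤ x` and exchanging the order of
summation, each `j ≤ x` is counted `j + 1` times, which gives `F_Y(x)`, and each `j > x` is counted
`x + 1` times; the remaining tail `(x + 1) ∑_{j > x} P(N = j) / (j + 1)` is again a `₂F₁` series.
-/

open Finset Real

theorem Summable.tsum_nat_add_eq_add_tsum {α : Type*} [AddCommGroup α] [TopologicalSpace α]
    [IsTopologicalAddGroup α] [T2Space α] {f : ℕ → α} (hf : Summable f) (m : ℕ) :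
    ∑' n, f (n + m) = f m + ∑' n, f (n + (m + 1)) := by
  rw [((summable_nat_add_iff m).2 hf).tsum_eq_zero_add]
  simp only [zero_add, add_right_comm _ 1 m, add_assoc]

theorem Summable.sum_range_tsum_nat_add {α : Type*} [AddCommGroup α] [TopologicalSpace α]
    [IsTopologicalAddGroup α] [T2Space α] {f : ℕ → α} (hf : Summable f) (m : ℕ) :
    ∑ k ∈ range m, ∑' n, f (n + k) = ∑ j ∈ range m, (j + 1) • f j + m • ∑' n, f (n + m) := by
  induction m with
  | zero => simp
  | succ m ih =>
    rw [sum_range_succ, ih, sum_range_succ, hf.tsum_nat_add_eq_add_tsum m]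
    simp only [smul_add, add_smul, one_smul]
    abel

section

variable {r p : ℝ}

theorem poch_eq_Gamma_div {a : ℝ} (ha : 0 < a) (n : ℕ) : poch a n = Gamma (a + n) / Gamma a := by
  induction n with
  | zero => simp [poch, (Gamma_pos_of_pos ha).ne']
  | succ n ih =>
    rw [poch, prod_range_succ, ← poch, ih, Nat.cast_succ, ← add_assoc,
      Gamma_add_one (by positivity)]
    ring

theorem F21_one_left (b c z : ℝ) : F21 1 b c z = ∑' n : ℕ, poch b n / poch c n * z ^ n := by
  refine tsum_congr fun n => ?_
  rw [poch_eq_Gamma_div one_pos, add_comm, Gamma_nat_eq_factorial, Gamma_one, div_one]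
  field_simp

theorem Gamma_nat_add_two (m n : ℕ) : Gamma ((m : ℝ) + 2 + n) = ((n + m + 1).factorial : ℝ) := by
  rw [← Gamma_nat_eq_factorial]; push_cast; ring_nf

theorem tsum_nbPMF_nat_add_div_succ (hr : 0 < r) (m : ℕ) :
    ∑' n : ℕ, nbPMF r p (n + m) / ((n + m : ℕ) + 1) =
      Gamma (r + m) / (Gamma r * ((m + 1).factorial : ℝ)) * p ^ r * (1 - p) ^ m *
        F21 1 (r + m) (m + 2) (1 - p) := by
  rw [F21_one_left, ← tsum_mul_left]
  refine tsum_congr fun n => ?_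
  have hΓr := (Gamma_pos_of_pos hr).ne'
  have hΓrm := (Gamma_pos_of_pos (show 0 < r + m by positivity)).ne'
  rw [poch_eq_Gamma_div (by positivity), poch_eq_Gamma_div (by positivity), nbPMF,
    Gamma_nat_add_two, show (m : ℝ) + 2 = (m + 1 : ℕ) + 1 by push_cast; ring,
    Gamma_nat_eq_factorial, Nat.factorial_succ (n + m), pow_add]
  push_cast
  rw [show r + ((n : ℝ) + m) = r + m + n by ring]
  field_simp

theorem unbPMF_eq_tsum (hr : 0 < r) (k : ℕ) :
    unbPMF r p k = ∑' n : ℕ, nbPMF r p (n + k) / ((n + k : ℕ) + 1) := by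
  have hΓr := (Gamma_pos_of_pos hr).ne'
  rw [tsum_nbPMF_nat_add_div_succ hr, unbPMF, add_comm 2, Nat.factorial_succ]
  push_cast
  field_simp

theorem F21_correction_eq_tsum (hr : 0 < r) (x : ℕ) :
    (r + x) / (x + 2) * (Gamma (r + x) / (Gamma r * (x.factorial : ℝ))) *
        p ^ r * (1 - p) ^ (x + 1) * F21 1 (r + x + 1) (x + 3) (1 - p) =
      (x + 1) * ∑' n : ℕ, nbPMF r p (n + (x + 1)) / ((n + (x + 1) : ℕ) + 1) := by
  rw [tsum_nbPMF_nat_add_div_succ hr, Nat.factorial_succ, Nat.factorial_succ]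
  push_cast
  rw [← add_assoc, Gamma_add_one (by positivity), show (x : ℝ) + 1 + 2 = x + 3 by ring]
  have hΓr := (Gamma_pos_of_pos hr).ne'
  field_simp
  ring

theorem nbPMF_pos (hr : 0 < r) (hp0 : 0 < p) (hp1 : p < 1) (n : ℕ) : 0 < nbPMF r p n := by
  have := Gamma_pos_of_pos (show 0 < r + n by positivity)
  have := Gamma_pos_of_pos hr
  have : 0 < 1 - p := sub_pos.2 hp1
  unfold nbPMF
  positivity

theorem nbPMF_succ (hr : 0 < r) (n : ℕ) :
    nbPMF r p (n + 1) = (r + n) / (n + 1) * (1 - p) * nbPMF r p n := by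
  have hΓr := (Gamma_pos_of_pos hr).ne'
  rw [nbPMF, nbPMF, Nat.factorial_succ]
  push_cast
  rw [← add_assoc, Gamma_add_one (by positivity)]
  field_simp
  ring

theorem summable_nbPMF_div_succ (hr : 0 < r) (hp0 : 0 < p) (hp1 : p < 1) :
    Summable fun n : ℕ => nbPMF r p n / (n + 1) := by
  have hpos n : 0 < nbPMF r p n / (n + 1) := div_pos (nbPMF_pos hr hp0 hp1 n) (by positivity)
  have hratio n : ‖nbPMF r p (n + 1) / ((n + 1 : ℕ) + 1)‖ / ‖nbPMF r p n / (n + 1)‖ =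
      (r + 1 * n) / (2 + 1 * n) * (1 - p) := by
    rw [Real.norm_of_nonneg (hpos (n + 1)).le, Real.norm_of_nonneg (hpos n).le, nbPMF_succ hr]
    have := (nbPMF_pos hr hp0 hp1 n).ne'
    push_cast
    field_simp
    ring
  refine summable_of_ratio_test_tendsto_lt_one (l := 1 / 1 * (1 - p))
    (by rw [div_one, one_mul]; linarith) (.of_forall fun n => (hpos n).ne') ?_
  simp_rw [hratio]
  exact (tendsto_add_mul_div_add_mul_atTop_nhds r 2 1 one_ne_zero).mul_const _

end

theorem stmt7 (r p : ℝ) (hr : 0 < r) (hp0 : 0 < p) (hp1 : p < 1) (x : ℕ) :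
    (∑ k ∈ Finset.range (x + 1), unbPMF r p k) =
      (∑ k ∈ Finset.range (x + 1), nbPMF r p k) +
        (r + x) / (x + 2) * (Real.Gamma (r + x) / (Real.Gamma r * (x.factorial : ℝ))) *
          p ^ r * (1 - p) ^ (x + 1) * F21 1 (r + x + 1) (x + 3) (1 - p) := by
  have hf := summable_nbPMF_div_succ hr hp0 hp1
  have hmix k (_ : k ∈ range (x + 1)) := unbPMF_eq_tsum (p := p) hr k
  have hnb j (_ : j ∈ range (x + 1)) : (j + 1) • (nbPMF r p j / (j + 1)) = nbPMF r p j := by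
    rw [nsmul_eq_mul, Nat.cast_succ, mul_div_cancel₀ _ (by positivity)]
  rw [sum_congr rfl hmix, hf.sum_range_tsum_nat_add, sum_congr rfl hnb, F21_correction_eq_tsum hr,
    nsmul_eq_mul, Nat.cast_succ]
end
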